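/- Suppose f : {0,1}^{2n} → {0,1} is monotone with Φ_f(1) ≥ λ for some λ ≥ 1/n. Then there exists γ = γ(λ) > 0 (independent of n) such that E_π[Φ_g(π(1))] ≥ γ, where π : [2n] → [n] is a uniformly random 2-to-1 function and g is the minor of f with respect to π. -/

import Mathlib

open Finset

/-- A Boolean function on subsets of `Fin m` is monotone. -/
def MonotoneB {m : ℕ} (f : Finset (Fin m) → Bool) : Prop :=
  ∀ S T : Finset (Fin m), S ⊆ T → f S = true → f T = true

/-- The boundary of coordinate `i`: sets `S` not containing `i` with
`f (S ∪ {i}) = 1` and `f S = 0`. -/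
def boundary {m : ℕ} (f : Finset (Fin m) → Bool) (i : Fin m) : Finset (Finset (Fin m)) :=
  Finset.univ.filter (fun S => i ∉ S ∧ f (insert i S) = true ∧ f S = false)

/-- `mu f i j` : the fraction of size-`j` subsets of `[m] \ {i}` lying in the
boundary of coordinate `i`. -/
def mu {m : ℕ} (f : Finset (Fin m) → Bool) (i : Fin m) (j : ℕ) : ℚ :=
  (((boundary f i).filter (fun S => S.card = j)).card : ℚ) / (((m - 1).choose j : ℕ) : ℚ)

/-- The Shapley value of coordinate `i` of `f` : the probability over a uniformly
random permutation `σ` that `i` is the pivotal coordinate on the increasing path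
`∅ = P₀ ⊂ P₁ ⊂ ⋯ ⊂ Pₘ = univ` given by `σ`. -/
def shapley {m : ℕ} (f : Finset (Fin m) → Bool) (i : Fin m) : ℚ :=
  (((Finset.univ : Finset (Equiv.Perm (Fin m))).filter (fun σ =>
    ∃ j : Fin m, σ j = i ∧
      f ((Finset.univ.filter (fun k => k < j)).image (fun k => σ k)) = false ∧
      f ((Finset.univ.filter (fun k => k ≤ j)).image (fun k => σ k)) = true)).card : ℚ)
    / ((Nat.factorial m : ℕ) : ℚ)

/-- `g` is the minor of `f` with respect to `π`. -/
def minorOf {m k : ℕ} (g : Finset (Fin k) → Bool) (f : Finset (Fin m) → Bool)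
    (π : Fin m → Fin k) : Prop :=
  ∀ S : Finset (Fin k), g S = f (Finset.univ.filter (fun i => π i ∈ S))

/-- The minor of `f` with respect to `π`, as a function. -/
def minorFun {m k : ℕ} (f : Finset (Fin m) → Bool) (π : Fin m → Fin k) :
    Finset (Fin k) → Bool :=
  fun S => f (Finset.univ.filter (fun i => π i ∈ S))

/-- The set of 2-to-1 maps `π : [2n] → [n]`. -/
def twoToOneMaps (n : ℕ) : Finset (Fin (2*n) → Fin n) :=
  Finset.univ.filter (fun π =>
    ∀ i : Fin n, (Finset.univ.filter (fun j => π j = i)).card = 2)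


/-!
Adding the coordinates of `[2n]` in the order of a uniformly random permutation two at a time
gives a coarse path whose consecutive pairs are the fibres of a uniformly random 2-to-1 map `π`,
taken in a uniformly random order `τ`. Along the Shapley path of the minor `g` through `τ`, the
coordinate `π(1)` is pivotal exactly when `1` is pivotal for `f` along this coarse path. Since
`f` is monotone, a coordinate pivotal on the fine path stays pivotal on the coarse one, so
`E_π[Φ_g(π(1))] ≥ Φ_f(1) ≥ λ`, and `γ = λ` works.
-/

open Equiv

lemma image_perm_filter {ι : Type*} [Fintype ι] [DecidableEq ι] (σ : Perm ι) (P : ι → Prop)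
    [DecidablePred P] :
    ({k | P k} : Finset ι).image (fun k => σ k) = ({i | P (σ.symm i)} : Finset ι) := by
  ext i
  simp only [mem_image, mem_filter, mem_univ, true_and]
  exact ⟨fun ⟨k, hk, hki⟩ => by rwa [← hki, symm_apply_apply],
    fun h => ⟨σ.symm i, h, σ.apply_symm_apply i⟩⟩

section Pivotal

variable {m : ℕ} {α β : Type*} [LinearOrder α] [LinearOrder β]

/-- `e` is pivotal for `f` along the ordered partition of `Fin m` into the level sets of `q`:
`f` is off on the blocks strictly before the block of `e` and on once that block is added. -/
def IsPivotalAlong (f : Finset (Fin m) → Bool) (e : Fin m) (q : Fin m → α) : Prop :=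
  f {i | q i < q e} = false ∧ f {i | q i ≤ q e} = true

instance (f : Finset (Fin m) → Bool) (e : Fin m) (q : Fin m → α) :
    Decidable (IsPivotalAlong f e q) :=
  inferInstanceAs (Decidable (_ ∧ _))

/-- A permutation `σ` lists the coordinates in the order `σ 0, σ 1, …`, so the position of
coordinate `i` on the path is `σ.symm i`. -/
lemma shapley_eq_card_isPivotalAlong (f : Finset (Fin m) → Bool) (e : Fin m) :
    shapley f e = #{σ : Perm (Fin m) | IsPivotalAlong f e σ.symm} / (m.factorial : ℚ) := by
  unfold shapley
  congr 3
  refine filter_congr fun σ _ => ⟨?_, fun h => ⟨σ.symm e, σ.apply_symm_apply e, ?_⟩⟩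
  · rintro ⟨j, rfl, h⟩
    rw [image_perm_filter, image_perm_filter] at h
    simpa only [IsPivotalAlong, symm_apply_apply] using h
  · rw [image_perm_filter, image_perm_filter]
    exact h

lemma isPivotalAlong_minorFun_iff {k : ℕ} (f : Finset (Fin m) → Bool) (π : Fin m → Fin k)
    (e : Fin m) (q : Fin k → α) :
    IsPivotalAlong (minorFun f π) (π e) q ↔ IsPivotalAlong f e (q ∘ π) := by
  simp [IsPivotalAlong, minorFun]

lemma IsPivotalAlong.comp_monotone {f : Finset (Fin m) → Bool} (hf : MonotoneB f) {e : Fin m}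
    {q : Fin m → α} (h : IsPivotalAlong f e q) {r : α → β} (hr : Monotone r) :
    IsPivotalAlong f e (r ∘ q) := by
  refine ⟨?_, hf {i | q i ≤ q e} _ (fun i => by simpa using fun hi => hr hi) h.2⟩
  by_contra hon
  have := hf _ {i | q i < q e} (fun i => by simpa using fun hi => hr.reflect_lt hi)
    (Bool.not_eq_false _ ▸ hon)
  simp [h.1] at this

end Pivotal

section FiberCount

variable {α β : Type*} [Fintype α] [DecidableEq β]

lemma exists_perm_comp_eq (p q : α → β) (h : ∀ b, #{a | q a = b} = #{a | p a = b}) :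
    ∃ ρ : Perm α, p ∘ ρ = q := by
  let e : ∀ b, {a // q a = b} ≃ {a // p a = b} := fun b =>
    Fintype.equivOfCardEq (by rw [Fintype.card_subtype, Fintype.card_subtype, h b])
  exact ⟨ofFiberEquiv e, funext (ofFiberEquiv_map e)⟩

lemma card_filter_comp_perm (p : α → β) (σ : Perm α) (b : β) :
    #{a | p (σ a) = b} = #{a | p a = b} :=
  card_equiv σ (by simp)

lemma card_perm_comp_symm_eq [DecidableEq α] (p q : α → β)
    (h : ∀ b, #{a | q a = b} = #{a | p a = b}) :
    #{σ : Perm α | p ∘ σ.symm = q} = #{σ : Perm α | p ∘ σ.symm = p} := by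
  obtain ⟨ρ, rfl⟩ := exists_perm_comp_eq p q h
  refine card_equiv (Equiv.mulLeft ρ) fun σ => ?_
  simp only [mem_filter, mem_univ, true_and, coe_mulLeft, funext_iff, Function.comp_apply,
    Perm.mul_def, symm_trans_apply]
  exact ⟨fun h x => by rw [h, apply_symm_apply],
    fun h x => by simpa using h (ρ x)⟩

/-- Every fibre of `σ ↦ p ∘ σ⁻¹` over a map with the fibre sizes of `p` is a coset of the
stabiliser of `p`. -/
lemma card_perm_filter_comp_symm [DecidableEq α] (p : α → β) (T : Finset (α → β))
    (hT : ∀ q, q ∈ T ↔ ∀ b, #{a | q a = b} = #{a | p a = b})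
    (P : (α → β) → Prop) [DecidablePred P] :
    #{σ : Perm α | P (p ∘ σ.symm)}
      = #{q ∈ T | P q} * #{σ : Perm α | p ∘ σ.symm = p} := by
  have hmaps : ∀ σ ∈ ({σ : Perm α | P (p ∘ σ.symm)} : Finset (Perm α)),
      p ∘ σ.symm ∈ ({q ∈ T | P q} : Finset (α → β)) := by
    intro σ hσ
    simp only [mem_filter, mem_univ, true_and] at hσ ⊢
    exact ⟨(hT _).2 fun b => card_filter_comp_perm p σ.symm b, hσ⟩
  rw [card_eq_sum_card_fiberwise hmaps]
  refine sum_const_nat fun q hq => ?_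
  simp only [mem_filter] at hq
  rw [filter_filter, ← card_perm_comp_symm_eq p q ((hT q).1 hq.1)]
  congr 1
  exact filter_congr fun σ _ => ⟨And.right, fun h => ⟨h ▸ hq.2, h⟩⟩

end FiberCount

section TwoToOne

variable {n : ℕ}

def pairIndex (n : ℕ) (j : Fin (2 * n)) : Fin n :=
  ⟨j / 2, by omega⟩

lemma pairIndex_monotone : Monotone (pairIndex n) :=
  fun _ _ h => Nat.div_le_div_right (c := 2) h

lemma card_pairIndex_fiber (i : Fin n) : #{j | pairIndex n j = i} = 2 := by
  have : ({j | pairIndex n j = i} : Finset (Fin (2 * n)))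
      = {⟨2 * i, by omega⟩, ⟨2 * i + 1, by omega⟩} := by
    ext j
    simp [pairIndex, Fin.ext_iff]
    omega
  rw [this, card_pair (by simp [Fin.ext_iff])]

lemma mem_twoToOneMaps_iff (π : Fin (2 * n) → Fin n) :
    π ∈ twoToOneMaps n ↔ ∀ i, #{j | π j = i} = #{j | pairIndex n j = i} := by
  simp [twoToOneMaps, card_pairIndex_fiber]

lemma comp_mem_twoToOneMaps (τ : Perm (Fin n)) {π : Fin (2 * n) → Fin n}
    (hπ : π ∈ twoToOneMaps n) : τ ∘ π ∈ twoToOneMaps n := by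
  simp only [twoToOneMaps, mem_filter, mem_univ, true_and, Function.comp_apply] at hπ ⊢
  intro i
  simpa [← eq_symm_apply] using hπ (τ.symm i)

/-- Relabelling the blocks by `τ⁻¹` turns the Shapley paths of a minor through `τ` into the
coarse paths of `f` along `τ⁻¹ ∘ π`, and `π ↦ τ⁻¹ ∘ π` permutes the 2-to-1 maps. -/
lemma sum_shapley_minorFun (f : Finset (Fin (2 * n)) → Bool) (e : Fin (2 * n)) :
    ∑ π ∈ twoToOneMaps n, shapley (minorFun f π) (π e)
      = #{q ∈ twoToOneMaps n | IsPivotalAlong f e q} := by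
  simp only [shapley_eq_card_isPivotalAlong, isPivotalAlong_minorFun_iff, ← sum_div]
  rw [div_eq_iff (by positivity)]
  norm_cast
  simp only [card_filter]
  rw [sum_comm]
  have hτ : ∀ τ : Perm (Fin n),
      ∑ π ∈ twoToOneMaps n, (if IsPivotalAlong f e (τ.symm ∘ π) then 1 else 0)
        = #{q ∈ twoToOneMaps n | IsPivotalAlong f e q} := by
    intro τ
    rw [card_filter]
    exact sum_nbij' (τ.symm ∘ ·) (τ ∘ ·) (fun π hπ => comp_mem_twoToOneMaps _ hπ)
      (fun π hπ => comp_mem_twoToOneMaps _ hπ) (fun π _ => by ext; simp)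
      (fun π _ => by ext; simp) (fun _ _ => rfl)
  rw [sum_congr rfl fun τ _ => hτ τ, sum_const, card_univ, Fintype.card_perm, Fintype.card_fin,
    smul_eq_mul, mul_comm, card_filter]

theorem shapley_le_average_shapley_minorFun {f : Finset (Fin (2 * n)) → Bool} (hf : MonotoneB f)
    (e : Fin (2 * n)) :
    shapley f e ≤ (∑ π ∈ twoToOneMaps n, shapley (minorFun f π) (π e)) /
      (((twoToOneMaps n).card : ℕ) : ℚ) := by
  set c := #{σ : Perm (Fin (2 * n)) | pairIndex n ∘ σ.symm = pairIndex n}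
  have hcount := card_perm_filter_comp_symm (pairIndex n) _ mem_twoToOneMaps_iff
  have htotal : (2 * n).factorial = #(twoToOneMaps n) * c := by
    simpa [Fintype.card_perm] using hcount fun _ => True
  have hcoarse : #{σ : Perm (Fin (2 * n)) | IsPivotalAlong f e σ.symm}
      ≤ #{q ∈ twoToOneMaps n | IsPivotalAlong f e q} * c := by
    rw [← hcount]
    exact card_le_card <| monotone_filter_right _ fun σ _ h =>
      h.comp_monotone hf pairIndex_monotone
  have hc : (c : ℚ) ≠ 0 := by
    have := (2 * n).factorial_pos
    rw [htotal] at this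
    exact_mod_cast (Nat.pos_of_mul_pos_left this).ne'
  calc shapley f e
      = #{σ : Perm (Fin (2 * n)) | IsPivotalAlong f e σ.symm} / ((2 * n).factorial : ℚ) :=
        shapley_eq_card_isPivotalAlong f e
    _ ≤ (#{q ∈ twoToOneMaps n | IsPivotalAlong f e q} * c : ℕ) / ((2 * n).factorial : ℚ) :=
        by gcongr
    _ = _ := by
        rw [sum_shapley_minorFun, htotal]
        push_cast
        exact mul_div_mul_right _ _ hc

end TwoToOne

/-- If `Φ_f(1) ≥ λ ≥ 1/n`, then for a uniformly random 2-to-1 minor `g` of `f`,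
`E_π[Φ_g(π(1))] ≥ γ` for some `γ(λ) > 0` independent of `n`. -/
theorem expected_shapley_random_two_to_one (lam : ℚ) : ∃ γ : ℚ, 0 < γ ∧
    ∀ (n : ℕ) (hn : 0 < n) (f : Finset (Fin (2*n)) → Bool),
      MonotoneB f → lam ≤ shapley f ⟨0, by omega⟩ → 1 / (n : ℚ) ≤ lam →
      γ ≤ (∑ π ∈ twoToOneMaps n, shapley (minorFun f π) (π ⟨0, by omega⟩)) /
            (((twoToOneMaps n).card : ℕ) : ℚ) := by
  by_cases hlam : 0 < lam
  · exact ⟨lam, hlam, fun n _ f hf hshapley _ =>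
      hshapley.trans (shapley_le_average_shapley_minorFun hf _)⟩
  · refine ⟨1, one_pos, fun n hn f _ _ hinv => absurd (lt_of_lt_of_le ?_ hinv) hlam⟩
    positivity
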